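/- arXiv:1107.4812 — 4 statements merged into one kernel-verified Lean document; each statement's English description precedes it below -/
import Mathlib

section
/- Let n ≥ 1 and let σ be a permutation of {1,…,m}. Then ℓ(σ) ≥ n if and only if there exist k ≤ 2n and a permutation τ of {1,…,k} with ℓ(τ) ≥ n such that σ contains τ. -/
/-!
Restricting `σ` to a set `T` of positions produces a pattern whose inversions are exactly the
inversions of `σ` with both endpoints in `T`. Hence patterns never have more inversions than
`σ`, and conversely any `n` inversions of `σ` have at most `2n` endpoints, which carry a pattern
with at least `n` inversions.
-/

/-- The (Coxeter) length of a permutation: its number of inversions,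
i.e. pairs `i < j` with `σ i > σ j`. -/
def invCount {m : ℕ} (σ : Equiv.Perm (Fin m)) : ℕ :=
  (Finset.univ.filter (fun p : Fin m × Fin m => p.1 < p.2 ∧ σ p.2 < σ p.1)).card

/-- `σ` pattern-contains `π`: there are indices `i_1 < ⋯ < i_k` such that
`σ (i_a) < σ (i_b)` iff `π a < π b`. -/
def PatternContains {n k : ℕ} (σ : Equiv.Perm (Fin n)) (π : Equiv.Perm (Fin k)) : Prop :=
  ∃ f : Fin k ↪o Fin n, ∀ a b : Fin k, σ (f a) < σ (f b) ↔ π a < π b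

open Finset

namespace Equiv.Perm

variable {m k : ℕ}

def inversions (σ : Perm (Fin m)) : Finset (Fin m × Fin m) :=
  univ.filter fun p => p.1 < p.2 ∧ σ p.2 < σ p.1

theorem mem_inversions {σ : Perm (Fin m)} {p : Fin m × Fin m} :
    p ∈ σ.inversions ↔ p.1 < p.2 ∧ σ p.2 < σ p.1 := by
  simp [inversions]

theorem invCount_eq_card_inversions (σ : Perm (Fin m)) : invCount σ = #σ.inversions := rfl

def inversionsWithin (σ : Perm (Fin m)) (T : Finset (Fin m)) : Finset (Fin m × Fin m) :=
  σ.inversions.filter fun p => p.1 ∈ T ∧ p.2 ∈ T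

theorem map_inversions_eq_inversionsWithin {σ : Perm (Fin m)} {τ : Perm (Fin k)}
    (f : Fin k ↪o Fin m) (hf : ∀ a b, σ (f a) < σ (f b) ↔ τ a < τ b) :
    τ.inversions.map (f.toEmbedding.prodMap f.toEmbedding) =
      σ.inversionsWithin (univ.image f) := by
  ext ⟨i, j⟩
  simp only [inversionsWithin, mem_map, mem_filter, mem_inversions, mem_image, mem_univ,
    true_and, Prod.exists, Function.Embedding.coe_prodMap, Prod.map, Prod.mk.injEq,
    RelEmbedding.coe_toEmbedding]
  constructor
  · rintro ⟨a, b, ⟨hab, hτ⟩, rfl, rfl⟩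
    exact ⟨⟨f.lt_iff_lt.2 hab, (hf b a).2 hτ⟩, ⟨a, rfl⟩, ⟨b, rfl⟩⟩
  · rintro ⟨⟨hij, hσ⟩, ⟨a, rfl⟩, ⟨b, rfl⟩⟩
    exact ⟨a, b, ⟨f.lt_iff_lt.1 hij, (hf b a).1 hσ⟩, rfl, rfl⟩

theorem invCount_eq_card_inversionsWithin {σ : Perm (Fin m)} {τ : Perm (Fin k)}
    (f : Fin k ↪o Fin m) (hf : ∀ a b, σ (f a) < σ (f b) ↔ τ a < τ b) :
    invCount τ = #(σ.inversionsWithin (univ.image f)) := by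
  rw [invCount_eq_card_inversions, ← card_map, map_inversions_eq_inversionsWithin f hf]

theorem _root_.PatternContains.invCount_le {σ : Perm (Fin m)} {τ : Perm (Fin k)}
    (h : PatternContains σ τ) : invCount τ ≤ invCount σ := by
  obtain ⟨f, hf⟩ := h
  rw [invCount_eq_card_inversionsWithin f hf]
  exact card_filter_le _ _

theorem exists_perm_lt_iff_lt {α : Type*} [LinearOrder α] {g : Fin k → α}
    (hg : Function.Injective g) : ∃ τ : Perm (Fin k), ∀ a b, g a < g b ↔ τ a < τ b := by
  have hsorted : StrictMono (g ∘ Tuple.sort g) :=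
    (Tuple.monotone_sort g).strictMono_of_injective (hg.comp (Tuple.sort g).injective)
  refine ⟨(Tuple.sort g)⁻¹, fun a b => ?_⟩
  simpa using hsorted.lt_iff_lt (a := (Tuple.sort g)⁻¹ a) (b := (Tuple.sort g)⁻¹ b)

theorem exists_patternContains_invCount_eq (σ : Perm (Fin m)) (T : Finset (Fin m)) :
    ∃ τ : Perm (Fin #T), PatternContains σ τ ∧ invCount τ = #(σ.inversionsWithin T) := by
  let f := T.orderEmbOfFin rfl
  obtain ⟨τ, hτ⟩ := exists_perm_lt_iff_lt (σ.injective.comp f.injective)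
  refine ⟨τ, ⟨f, hτ⟩, ?_⟩
  rw [invCount_eq_card_inversionsWithin f hτ, image_orderEmbOfFin_univ]

end Equiv.Perm

theorem length_ge_iff_contains_short_pattern_general {n m : ℕ}
    (σ : Equiv.Perm (Fin m)) :
    n ≤ invCount σ ↔
      ∃ k ≤ 2 * n, ∃ τ : Equiv.Perm (Fin k), n ≤ invCount τ ∧ PatternContains σ τ := by
  refine ⟨fun hσ => ?_, fun ⟨k, _, τ, hτ, hστ⟩ => hτ.trans hστ.invCount_le⟩
  obtain ⟨J, hJσ, hJcard⟩ := exists_subset_card_eq hσ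
  let T := J.image Prod.fst ∪ J.image Prod.snd
  have hTcard : #T ≤ 2 * n := by
    calc #T ≤ #(J.image Prod.fst) + #(J.image Prod.snd) := card_union_le _ _
      _ ≤ #J + #J := add_le_add card_image_le card_image_le
      _ = 2 * n := by omega
  have hJT : J ⊆ σ.inversionsWithin T := fun p hp =>
    mem_filter.2 ⟨hJσ hp, mem_union_left _ (mem_image_of_mem _ hp),
      mem_union_right _ (mem_image_of_mem _ hp)⟩
  obtain ⟨τ, hστ, hτ⟩ := σ.exists_patternContains_invCount_eq T
  exact ⟨#T, hTcard, τ, hτ ▸ hJcard ▸ card_le_card hJT, hστ⟩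

/-- Theorem 3.1: for `n ≥ 1`, a permutation `σ ∈ S_m` has `ℓ(σ) ≥ n` iff `σ`
contains some `τ ∈ S_k` with `k ≤ 2n` and `ℓ(τ) ≥ n`. -/
theorem length_ge_iff_contains_short_pattern {n m : ℕ} (hn : 1 ≤ n)
    (σ : Equiv.Perm (Fin m)) :
    n ≤ invCount σ ↔
      ∃ k ≤ 2 * n, ∃ τ : Equiv.Perm (Fin k), n ≤ invCount τ ∧ PatternContains σ τ :=
  length_ge_iff_contains_short_pattern_general σ
end

section
/- For n ≥ 1, let w be the permutation of {1,…,2n} with w(2i−1) = 2i and w(2i) = 2i−1 for 1 ≤ i ≤ n (in one-line notation, 2 1 4 3 6 5 ⋯). Then ℓ(w) = n, and every permutation τ of {1,…,k} with k < 2n that is contained in w satisfies ℓ(τ) < n. (Hence the bound 2n in the theorem characterizing permutations of length at least n is sharp.) -/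
lemma key_inv {n : ℕ} (w : Equiv.Perm (Fin (2 * n)))
    (hw : ∀ i : Fin (2 * n),
      (w i : ℕ) = if (i : ℕ) % 2 = 0 then (i : ℕ) + 1 else (i : ℕ) - 1)
    (i j : Fin (2 * n)) (hij : i < j) :
    w j < w i ↔ ((i : ℕ) % 2 = 0 ∧ (j : ℕ) = (i : ℕ) + 1) := by
  rw [Fin.lt_def, hw i, hw j]
  rw [Fin.lt_def] at hij
  split_ifs <;> omega

/-- The bound `2n` is sharp: the permutation `2 1 4 3 6 5 ⋯ (2n) (2n-1)` of `{1,…,2n}`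
(in `0`-indexed form it sends even `i` to `i+1` and odd `i` to `i-1`) has length `n`,
and every pattern `τ ∈ S_k` with `k < 2n` contained in it has length `< n`. -/
theorem sharpness_of_2n_bound {n : ℕ} (hn : 1 ≤ n) (w : Equiv.Perm (Fin (2 * n)))
    (hw : ∀ i : Fin (2 * n),
      (w i : ℕ) = if (i : ℕ) % 2 = 0 then (i : ℕ) + 1 else (i : ℕ) - 1) :
    invCount w = n ∧
      ∀ k < 2 * n, ∀ τ : Equiv.Perm (Fin k), PatternContains w τ → invCount τ < n := by
  constructor
  · unfold invCount
    have hset : Finset.univ.filter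
        (fun p : Fin (2*n) × Fin (2*n) => p.1 < p.2 ∧ w p.2 < w p.1)
        = Finset.image (fun i : Fin n =>
            ((⟨2*i, by omega⟩ : Fin (2*n)), (⟨2*i+1, by omega⟩ : Fin (2*n))))
          Finset.univ := by
      ext p
      simp only [Finset.mem_filter, Finset.mem_univ, true_and, Finset.mem_image]
      constructor
      · rintro ⟨h1, h2⟩
        rw [key_inv w hw _ _ h1] at h2
        obtain ⟨he, hj⟩ := h2
        have hlt := p.1.isLt
        refine ⟨⟨(p.1 : ℕ) / 2, by omega⟩, ?_⟩
        refine Prod.ext (Fin.ext ?_) (Fin.ext ?_) <;> simp <;> omega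
      · rintro ⟨i, rfl⟩
        have hi := i.isLt
        refine ⟨by simp [Fin.lt_def], ?_⟩
        rw [key_inv w hw _ _ (by simp [Fin.lt_def])]
        simp
    rw [hset, Finset.card_image_of_injective _ ?_, Finset.card_univ, Fintype.card_fin]
    intro a b hab
    simp only [Prod.mk.injEq, Fin.mk.injEq] at hab
    omega
  · intro k hk τ hpat
    obtain ⟨f, hf⟩ := hpat
    unfold invCount
    set S := Finset.univ.filter (fun p : Fin k × Fin k => p.1 < p.2 ∧ τ p.2 < τ p.1) with hS
    have hmem : ∀ p : Fin k × Fin k, p ∈ S ↔ p.1 < p.2 ∧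
        ((f p.1 : Fin (2*n)) : ℕ) % 2 = 0 ∧
        ((f p.2 : Fin (2*n)) : ℕ) = ((f p.1 : Fin (2*n)) : ℕ) + 1 := by
      intro p
      simp only [hS, Finset.mem_filter, Finset.mem_univ, true_and]
      have hfl : ∀ a b : Fin k, a < b → f a < f b := fun a b h => f.lt_iff_lt.mpr h
      constructor
      · rintro ⟨h1, h2⟩
        rw [← hf p.2 p.1, key_inv w hw _ _ (hfl _ _ h1)] at h2
        exact ⟨h1, h2⟩
      · rintro ⟨h1, h2⟩
        refine ⟨h1, ?_⟩
        rw [← hf p.2 p.1, key_inv w hw _ _ (hfl _ _ h1)]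
        exact h2
    have hinjf : Function.Injective f := f.injective
    have hA : (S.image Prod.fst).card = S.card := by
      apply Finset.card_image_of_injOn
      intro p hp q hq hpq
      rw [Finset.mem_coe, hmem] at hp hq
      have : f p.2 = f q.2 := by
        apply Fin.ext
        rw [hp.2.2, hq.2.2, hpq]
      exact Prod.ext hpq (hinjf this)
    have hB : (S.image Prod.snd).card = S.card := by
      apply Finset.card_image_of_injOn
      intro p hp q hq hpq
      rw [Finset.mem_coe, hmem] at hp hq
      have : f p.1 = f q.1 := by
        apply Fin.ext
        have h1 := hp.2.2
        have h2 := hq.2.2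
        rw [hpq] at h1
        omega
      exact Prod.ext (hinjf this) hpq
    have hdisj : Disjoint (S.image Prod.fst) (S.image Prod.snd) := by
      rw [Finset.disjoint_left]
      intro a haA haB
      simp only [Finset.mem_image] at haA haB
      obtain ⟨p, hp, hp1⟩ := haA
      obtain ⟨q, hq, hq2⟩ := haB
      rw [hmem] at hp hq
      have e1 : ((f a : Fin (2*n)) : ℕ) % 2 = 0 := hp1 ▸ hp.2.1
      have e2 : ((f a : Fin (2*n)) : ℕ) = ((f q.1 : Fin (2*n)) : ℕ) + 1 := hq2 ▸ hq.2.2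
      have e3 := hq.2.1
      omega
    have hcard : (S.image Prod.fst ∪ S.image Prod.snd).card ≤ k := by
      calc (S.image Prod.fst ∪ S.image Prod.snd).card
          ≤ (Finset.univ : Finset (Fin k)).card := Finset.card_le_univ _
        _ = k := by simp
    rw [Finset.card_union_of_disjoint hdisj, hA, hB] at hcard
    omega
end

section
/- Let n ≥ 1, m > 2n, and let σ be a permutation of {1,…,m} having at least one fixed point. Then ℓ(σ) ≥ n if and only if there exist k < m and a permutation τ of {1,…,k} with ℓ(τ) ≥ n such that σ contains τ. -/
/-!
Any `n` inversions of `σ` involve at most `2n < m` positions, and the pattern of `σ` on those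
positions is a proper pattern still having these `n` inversions. Conversely, an order embedding
realising a pattern maps its inversions injectively to inversions of `σ`.
-/

open Finset

def inversions {m : ℕ} (σ : Equiv.Perm (Fin m)) : Finset (Fin m × Fin m) :=
  univ.filter fun p => p.1 < p.2 ∧ σ p.2 < σ p.1

lemma mem_inversions {m : ℕ} {σ : Equiv.Perm (Fin m)} {p : Fin m × Fin m} :
    p ∈ inversions σ ↔ p.1 < p.2 ∧ σ p.2 < σ p.1 := by
  simp [inversions]

lemma card_inversions {m : ℕ} (σ : Equiv.Perm (Fin m)) : #(inversions σ) = invCount σ := rfl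

/-- The inverse of the sorting permutation of `g` records the relative order of its values. -/
lemma exists_perm_lt_iff_lt {α : Type*} [LinearOrder α] {k : ℕ} {g : Fin k → α}
    (hg : Function.Injective g) :
    ∃ τ : Equiv.Perm (Fin k), ∀ a b, g a < g b ↔ τ a < τ b := by
  set π := Tuple.sort g
  have hπ : StrictMono (g ∘ π) :=
    (Tuple.monotone_sort g).strictMono_iff_injective.mpr (hg.comp π.injective)
  refine ⟨π⁻¹, fun a b => ?_⟩
  simpa using hπ.lt_iff_lt (a := π⁻¹ a) (b := π⁻¹ b)

lemma invCount_le_of_patternContains {m k : ℕ} {σ : Equiv.Perm (Fin m)}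
    {τ : Equiv.Perm (Fin k)} (h : PatternContains σ τ) : invCount τ ≤ invCount σ := by
  obtain ⟨f, hf⟩ := h
  rw [← card_inversions, ← card_inversions]
  refine card_le_card_of_injOn (Prod.map f f) (fun p hp => ?_) ?_
  · rw [mem_coe, mem_inversions] at hp ⊢
    exact ⟨f.lt_iff_lt.mpr hp.1, (hf _ _).mpr hp.2⟩
  · exact (f.injective.prodMap f.injective).injOn

lemma exists_patternContains_of_subset_inversions {m : ℕ} (σ : Equiv.Perm (Fin m))
    {F : Finset (Fin m × Fin m)} (hF : F ⊆ inversions σ) :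
    ∃ k ≤ 2 * #F, ∃ τ : Equiv.Perm (Fin k), #F ≤ invCount τ ∧ PatternContains σ τ := by
  set S := F.image Prod.fst ∪ F.image Prod.snd
  have hS : #S ≤ 2 * #F := calc
    #S ≤ #(F.image Prod.fst) + #(F.image Prod.snd) := card_union_le _ _
    _ ≤ #F + #F := add_le_add card_image_le card_image_le
    _ = 2 * #F := (two_mul _).symm
  set f := S.orderEmbOfFin rfl
  obtain ⟨τ, hτ⟩ := exists_perm_lt_iff_lt (σ.injective.comp f.injective)
  refine ⟨#S, hS, τ, ?_, f, hτ⟩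
  have hrange : ∀ x ∈ S, ∃ a, f a = x := fun x hx => by
    rwa [← Set.mem_range, range_orderEmbOfFin]
  have hF_image : F ⊆ (inversions τ).image (Prod.map f f) := by
    rintro ⟨x, y⟩ hp
    obtain ⟨a, rfl⟩ := hrange x (mem_union_left _ (mem_image_of_mem _ hp))
    obtain ⟨b, rfl⟩ := hrange y (mem_union_right _ (mem_image_of_mem _ hp))
    obtain ⟨hab, hσ⟩ := mem_inversions.mp (hF hp)
    exact mem_image.mpr ⟨(a, b), mem_inversions.mpr ⟨f.lt_iff_lt.mp hab, (hτ _ _).mp hσ⟩, rfl⟩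
  calc #F ≤ #((inversions τ).image (Prod.map f f)) := card_le_card hF_image
    _ ≤ invCount τ := card_image_le

theorem fixed_point_lemma_general {n m : ℕ} (hm : 2 * n < m) (σ : Equiv.Perm (Fin m)) :
    n ≤ invCount σ ↔
      ∃ k < m, ∃ τ : Equiv.Perm (Fin k), n ≤ invCount τ ∧ PatternContains σ τ := by
  constructor
  · intro hσ
    obtain ⟨F, hF, rfl⟩ := exists_subset_card_eq (s := inversions σ) hσ
    obtain ⟨k, hk, τ, hτ, hστ⟩ := exists_patternContains_of_subset_inversions σ hF
    exact ⟨k, hk.trans_lt hm, τ, hτ, hστ⟩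
  · rintro ⟨k, -, τ, hτ, hστ⟩
    exact hτ.trans (invCount_le_of_patternContains hστ)

/-- Lemma 3.3: let `n ≥ 1`, `m > 2n`, and let `σ ∈ S_m` have a fixed point. Then
`ℓ(σ) ≥ n` iff `σ` strictly contains (i.e. contains with `k < m`) a permutation `τ`
with `ℓ(τ) ≥ n`. -/
theorem fixed_point_lemma {n m : ℕ} (hn : 1 ≤ n) (hm : 2 * n < m)
    (σ : Equiv.Perm (Fin m)) (hfix : ∃ i : Fin m, σ i = i) :
    n ≤ invCount σ ↔
      ∃ k < m, ∃ τ : Equiv.Perm (Fin k), n ≤ invCount τ ∧ PatternContains σ τ :=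
  fixed_point_lemma_general hm σ
end

section
/- Let σ be a permutation of {1,…,m} and let i be a fixed point of σ (σ(i) = i). If i is involved in some inversion of σ (i.e., there is j > i with σ(j) < i, or j < i with σ(j) > i), then i is the middle element of a 321 pattern: there exist p < i and q > i with σ(p) > i > σ(q). In particular, a fixed point involved in a 321 pattern is involved in at least 2 inversions, and a fixed point not involved in any 321 pattern is involved in no inversions. -/
/-- The number of inversions of `σ` involving a given index `i`: pairs `p < q` with
`σ p > σ q` and `p = i` or `q = i`. -/
def invCountInvolving {m : ℕ} (σ : Equiv.Perm (Fin m)) (i : Fin m) : ℕ :=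
  (Finset.univ.filter (fun p : Fin m × Fin m =>
    p.1 < p.2 ∧ σ p.2 < σ p.1 ∧ (p.1 = i ∨ p.2 = i))).card

/-- `i` is involved in a `321` pattern of `σ`: there are indices `p < q < r`, one of
which is `i`, with `σ p > σ q > σ r`. -/
def InvolvedIn321 {m : ℕ} (σ : Equiv.Perm (Fin m)) (i : Fin m) : Prop :=
  ∃ p q r : Fin m, p < q ∧ q < r ∧ σ r < σ q ∧ σ q < σ p ∧ (p = i ∨ q = i ∨ r = i)

private lemma aux_pigeon {m : ℕ} (σ : Equiv.Perm (Fin m)) (i : Fin m) (hfix : σ i = i)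
    {j : Fin m} (hij : i < j) (hji : σ j < i) : ∃ p, p < i ∧ i < σ p := by
  by_contra h
  push_neg at h
  set S : Finset (Fin m) := Finset.univ.filter (· < i) with hS
  have hmap : ∀ p ∈ S, σ p ∈ S := by
    intro p hp
    simp only [hS, Finset.mem_filter, Finset.mem_univ, true_and] at hp ⊢
    rcases lt_or_eq_of_le (h p hp) with h' | h'
    · exact h'
    · exact absurd (σ.injective (h'.trans hfix.symm)) hp.ne
  have himg : S.image σ = S := by
    apply Finset.eq_of_subset_of_card_le
    · intro x hx
      rcases Finset.mem_image.mp hx with ⟨p, hp, rfl⟩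
      exact hmap p hp
    · rw [Finset.card_image_of_injective _ σ.injective]
  have hj : σ j ∈ S := by simp [hS, hji]
  rw [← himg, Finset.mem_image] at hj
  rcases hj with ⟨p, hp, hpj⟩
  have : p = j := σ.injective hpj
  simp only [hS, Finset.mem_filter] at hp
  exact absurd (this ▸ hp.2) (lt_asymm hij)

private lemma aux_pigeon' {m : ℕ} (σ : Equiv.Perm (Fin m)) (i : Fin m) (hfix : σ i = i)
    {j : Fin m} (hji : j < i) (hij : i < σ j) : ∃ q, i < q ∧ σ q < i := by
  have hfix' : σ⁻¹ i = i := by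
    rw [Equiv.Perm.inv_eq_iff_eq]; exact hfix.symm
  have h : σ⁻¹ (σ j) < i := by simpa using hji
  obtain ⟨p, hp, hp'⟩ := aux_pigeon σ⁻¹ i hfix' hij h
  refine ⟨σ⁻¹ p, hp', ?_⟩
  simpa using hp

/-- Let `i` be a fixed point of `σ ∈ S_m`. If `i` is involved in some inversion, then
`i` is the middle element of a `321` pattern: there are `p < i < q` with
`σ p > i > σ q`. In particular a fixed point involved in a `321` pattern is involved
in at least 2 inversions, and a fixed point not involved in any `321` pattern is
involved in no inversions. -/
theorem fixed_point_in_321 {m : ℕ} (σ : Equiv.Perm (Fin m)) (i : Fin m)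
    (hfix : σ i = i) :
    ((∃ j : Fin m, (i < j ∧ σ j < i) ∨ (j < i ∧ i < σ j)) →
      ∃ p q : Fin m, p < i ∧ i < q ∧ i < σ p ∧ σ q < i) ∧
    (InvolvedIn321 σ i → 2 ≤ invCountInvolving σ i) ∧
    (¬ InvolvedIn321 σ i → invCountInvolving σ i = 0) := by
  have key : (∃ j : Fin m, (i < j ∧ σ j < i) ∨ (j < i ∧ i < σ j)) →
      ∃ p q : Fin m, p < i ∧ i < q ∧ i < σ p ∧ σ q < i := by
    rintro ⟨j, ⟨hij, hji⟩ | ⟨hji, hij⟩⟩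
    · obtain ⟨p, hp, hp'⟩ := aux_pigeon σ i hfix hij hji
      exact ⟨p, j, hp, hij, hp', hji⟩
    · obtain ⟨q, hq, hq'⟩ := aux_pigeon' σ i hfix hji hij
      exact ⟨j, q, hji, hq, hij, hq'⟩
  refine ⟨key, ?_, ?_⟩
  · rintro ⟨p, q, r, hpq, hqr, hrq, hqp, hi⟩
    have two_pairs : ∀ a b : Fin m × Fin m, a ≠ b →
        (a.1 < a.2 ∧ σ a.2 < σ a.1 ∧ (a.1 = i ∨ a.2 = i)) →
        (b.1 < b.2 ∧ σ b.2 < σ b.1 ∧ (b.1 = i ∨ b.2 = i)) →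
        2 ≤ invCountInvolving σ i := by
      intro a b hne ha hb
      have hsub : ({a, b} : Finset (Fin m × Fin m)) ⊆
          Finset.univ.filter (fun p : Fin m × Fin m =>
            p.1 < p.2 ∧ σ p.2 < σ p.1 ∧ (p.1 = i ∨ p.2 = i)) := by
        intro x hx
        simp only [Finset.mem_insert, Finset.mem_singleton] at hx
        rcases hx with rfl | rfl <;> simp [Finset.mem_filter, ha, hb]
      have := Finset.card_le_card hsub
      rwa [Finset.card_insert_of_notMem (by simpa using hne), Finset.card_singleton] at this
    rcases hi with hi' | hi' | hi'
    · refine two_pairs (p, q) (p, r) (fun h => hqr.ne (congrArg Prod.snd h)) ?_ ?_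
      · exact ⟨hpq, hqp, Or.inl hi'⟩
      · exact ⟨hpq.trans hqr, hrq.trans hqp, Or.inl hi'⟩
    · refine two_pairs (p, q) (q, r) (fun h => hpq.ne (congrArg Prod.fst h)) ?_ ?_
      · exact ⟨hpq, hqp, Or.inr hi'⟩
      · exact ⟨hqr, hrq, Or.inl hi'⟩
    · refine two_pairs (p, r) (q, r) (fun h => hpq.ne (congrArg Prod.fst h)) ?_ ?_
      · exact ⟨hpq.trans hqr, hrq.trans hqp, Or.inr hi'⟩
      · exact ⟨hqr, hrq, Or.inr hi'⟩
  · intro hno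
    rw [invCountInvolving, Finset.card_eq_zero, Finset.filter_eq_empty_iff]
    rintro x - ⟨hlt, hinv, hi⟩
    apply hno
    rcases hi with h1 | h2
    · obtain ⟨p, q, hp, hq, hp', hq'⟩ := key ⟨x.2, Or.inl ⟨h1 ▸ hlt, by rwa [← hfix, ← h1]⟩⟩
      exact ⟨p, i, q, hp, hq, by rwa [hfix], by rwa [hfix], Or.inr (Or.inl rfl)⟩
    · obtain ⟨p, q, hp, hq, hp', hq'⟩ := key ⟨x.1, Or.inr ⟨h2 ▸ hlt, by rwa [← hfix, ← h2]⟩⟩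
      exact ⟨p, i, q, hp, hq, by rwa [hfix], by rwa [hfix], Or.inr (Or.inl rfl)⟩
end
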